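/- Let s ≥ 2 and a = (a_1, …, a_s) ∈ ℤ_{≥1}^s with a_1 > a_j for all 2 ≤ j ≤ s and gcd(a_1, a_2) = 1. Then for every j ≥ 0 there exists N ≥ s such that for all d, d' ≥ N, the coefficient of X^j in (1−X)^{d+1}·Ehr_{P(a;d)}(X) equals the coefficient of X^j in (1−X)^{d'+1}·Ehr_{P(a;d')}(X). That is, the h*-polynomials of the multidiagonal simplices P(a;d) converge coefficientwise in ℤ[[X]] as d → ∞. -/

import Mathlib

open scoped BigOperators Pointwise

/-- Ehrhart series of a (bounded) set `P ⊆ ℝ^n`: the coefficient of `X^t` is the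
number of lattice points of `ℤ^n` in the dilate `t • P`. -/
noncomputable def ehrhartSeries {n : ℕ} (P : Set (Fin n → ℝ)) : PowerSeries ℤ :=
  PowerSeries.mk fun t =>
    (Set.ncard {x : Fin n → ℤ | (fun i => (x i : ℝ)) ∈ (t : ℝ) • P} : ℤ)

/-- Vertices of the multidiagonal simplex `P(a; d) ⊆ ℝ^d`:
`w_0 = 0` and `w_c = ∑_{i=1}^{min(s,c)} a_i e_{c+1-i}` for `1 ≤ c ≤ d`
(coordinates are 0-indexed, so `e_t` is the indicator of index `t-1`). -/
def Wvert (s : ℕ) (a : Fin s → ℕ) (d : ℕ) : Fin (d + 1) → Fin d → ℝ := fun c p =>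
  if h : (p : ℕ) < (c : ℕ) ∧ (c : ℕ) - (p : ℕ) ≤ s then
    (a ⟨(c : ℕ) - (p : ℕ) - 1, by omega⟩ : ℝ)
  else 0

/-!
A point of `t • P(a;d)` is `∑_c μ_c w_c` with weights `μ_0, …, μ_d ≥ 0` summing to `t`, and its
coordinate `p` is the window sum `∑_i a_i μ_{p+i}`. These windows form a triangular system with
diagonal `a_1`, so lattice points of the dilates correspond to weight vectors in the lattice `Λ`
of those `μ` all of whose window sums are integers. Splitting weights into fractional and integral
parts gives the box formula: the `j`-th coefficient of the `h*`-series counts the `μ ∈ Λ` with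
`0 ≤ μ_c < 1` and `∑ μ_c = j`.

Such a box point is supported on `[0, A j]`, where `A = ∑ a_i`. Let `M` be the top of its
support. Going down through the windows, `gcd(a_1, a_2) = 1` shows that `μ_{M-k}` has
denominator exactly `a_1^(k+1)`, so `μ_1, …, μ_M` are all nonzero. Then the windows
`0, …, M - 1` are positive integers, while their total is at most `A ∑ μ_c = A j`. Hence for
`d ≥ A j` the box points of height `j` do not depend on `d`.
-/

open Finset PowerSeries

theorem mem_smul_convexHull_range_iff {ι E : Type*} [Fintype ι] [Nonempty ι] [AddCommGroup E]
    [Module ℝ E] (v : ι → E) {t : ℝ} (ht : 0 ≤ t) (x : E) :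
    x ∈ t • convexHull ℝ (Set.range v) ↔
      ∃ w : ι → ℝ, (∀ i, 0 ≤ w i) ∧ ∑ i, w i = t ∧ ∑ i, w i • v i = x := by
  classical
  have hull : convexHull ℝ (Set.range v) = Fintype.linearCombination ℝ v '' stdSimplex ℝ ι := by
    rw [← convexHull_basis_eq_stdSimplex, LinearMap.image_convexHull, ← Set.range_comp]
    congr 2
    ext i
    simp [Fintype.linearCombination_apply, ite_smul]
  rcases ht.eq_or_lt with rfl | ht
  · rw [Set.zero_smul_set ((Set.range_nonempty v).convexHull), Set.mem_zero]
    constructor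
    · rintro rfl
      exact ⟨0, fun _ => le_rfl, by simp, by simp⟩
    · rintro ⟨w, hw, hsum, rfl⟩
      have hw0 : ∀ i, w i = 0 := fun i =>
        (sum_eq_zero_iff_of_nonneg fun i _ => hw i).mp hsum i (mem_univ i)
      simp [hw0]
  · rw [Set.mem_smul_set_iff_inv_smul_mem₀ ht.ne', hull]
    constructor
    · rintro ⟨w, ⟨hw, hsum⟩, hwx⟩
      refine ⟨t • w, fun i => mul_nonneg ht.le (hw i), by simp [← mul_sum, hsum], ?_⟩
      rw [Fintype.linearCombination_apply] at hwx
      simp [mul_smul, ← smul_sum, hwx, smul_inv_smul₀ ht.ne']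
    · rintro ⟨w, hw, hsum, rfl⟩
      refine ⟨t⁻¹ • w, ⟨fun i => mul_nonneg (inv_nonneg.mpr ht.le) (hw i), ?_⟩, ?_⟩
      · simp [← mul_sum, hsum, ht.ne']
      · simp [Fintype.linearCombination_apply, smul_sum]

theorem Finset.card_piAntidiag_nat {ι : Type*} [DecidableEq ι] (S : Finset ι) (m : ℕ) :
    #(piAntidiag S m) = (#S + m - 1).choose m := by
  rw [← card_finsuppAntidiag_nat_eq_choose, finsuppAntidiag, card_map, card_attach]

section ConeCounting

variable {ι : Type*} (G : AddSubgroup (ι → ℝ)) (S : Finset ι)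

-- Weights on the vertices `S` of the points of `t • P`; `G` is the pull-back of the lattice.
def conePoints (t : ℕ) : Set (ι → ℝ) :=
  {μ | μ ∈ G ∧ (∀ i, 0 ≤ μ i) ∧ (∀ i ∉ S, μ i = 0) ∧ ∑ i ∈ S, μ i = t}

def boxPoints (h : ℕ) : Set (ι → ℝ) :=
  {l ∈ conePoints G S h | ∀ i, l i < 1}

variable {G S}

lemma sub_floor_mem_boxPoints (hG : ∀ n : ι → ℕ, (fun i => (n i : ℝ)) ∈ G) {t m : ℕ}
    (hm : m ≤ t) {μ : ι → ℝ} (hμ : μ ∈ conePoints G S t) (hfloor : ∑ i ∈ S, ⌊μ i⌋₊ = m) :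
    (fun i => μ i - ⌊μ i⌋₊) ∈ boxPoints G S (t - m) := by
  obtain ⟨hμG, hμ0, hμS, hμsum⟩ := hμ
  refine ⟨⟨sub_mem hμG (hG _), fun i => sub_nonneg.mpr (Nat.floor_le (hμ0 i)),
    fun i hi => by simp [hμS i hi], ?_⟩, fun i => sub_lt_iff_lt_add'.mpr (Nat.lt_floor_add_one _)⟩
  rw [sum_sub_distrib, hμsum, ← Nat.cast_sum, hfloor, Nat.cast_sub hm]

lemma floor_mem_piAntidiag [DecidableEq ι] {t m : ℕ} {μ : ι → ℝ} (hμ : μ ∈ conePoints G S t)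
    (hfloor : ∑ i ∈ S, ⌊μ i⌋₊ = m) : (fun i => ⌊μ i⌋₊) ∈ piAntidiag S m :=
  mem_piAntidiag.mpr ⟨hfloor, fun i hi => by_contra fun hiS => hi (by simp [hμ.2.2.1 i hiS])⟩

lemma floor_add_natCast_of_mem_boxPoints {h : ℕ} {l : ι → ℝ} (hl : l ∈ boxPoints G S h)
    (n : ι → ℕ) (i : ι) : ⌊l i + n i⌋₊ = n i := by
  rw [Nat.floor_add_natCast (hl.1.2.1 i), Nat.floor_eq_zero.mpr (hl.2 i), zero_add]

lemma add_natCast_mem_conePoints [DecidableEq ι] (hG : ∀ n : ι → ℕ, (fun i => (n i : ℝ)) ∈ G)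
    {t m : ℕ} (hm : m ≤ t) {l : ι → ℝ} (hl : l ∈ boxPoints G S (t - m)) {n : ι → ℕ}
    (hn : n ∈ piAntidiag S m) : (fun i => l i + n i) ∈ conePoints G S t := by
  obtain ⟨⟨hlG, hl0, hlS, hlsum⟩, -⟩ := hl
  rw [mem_piAntidiag] at hn
  have hnS : ∀ i ∉ S, n i = 0 := fun i hi => by_contra fun h => hi (hn.2 i h)
  refine ⟨add_mem hlG (hG n), fun i => add_nonneg (hl0 i) (Nat.cast_nonneg _),
    fun i hi => by simp [hlS i hi, hnS i hi], ?_⟩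
  rw [sum_add_distrib, hlsum, ← Nat.cast_sum, hn.1, ← Nat.cast_add, Nat.sub_add_cancel hm]

noncomputable def conePointsFloorEquiv [DecidableEq ι]
    (hG : ∀ n : ι → ℕ, (fun i => (n i : ℝ)) ∈ G) {t m : ℕ} (hm : m ≤ t) :
    {μ ∈ conePoints G S t | ∑ i ∈ S, ⌊μ i⌋₊ = m} ≃ boxPoints G S (t - m) × piAntidiag S m where
  toFun μ := (⟨_, sub_floor_mem_boxPoints hG hm μ.2.1 μ.2.2⟩, ⟨_, floor_mem_piAntidiag μ.2.1 μ.2.2⟩)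
  invFun ln := ⟨_, add_natCast_mem_conePoints hG hm ln.1.2 ln.2.2, by
    simp only [floor_add_natCast_of_mem_boxPoints ln.1.2]
    exact (mem_piAntidiag.mp ln.2.2).1⟩
  left_inv μ := by ext i; simp
  right_inv ln := by ext i <;> simp [floor_add_natCast_of_mem_boxPoints ln.1.2]

lemma ncard_conePoints [DecidableEq ι] (hG : ∀ n : ι → ℕ, (fun i => (n i : ℝ)) ∈ G) {t : ℕ}
    (hfin : (conePoints G S t).Finite) :
    (conePoints G S t).ncard =
      ∑ m ∈ range (t + 1), #(piAntidiag S m) * (boxPoints G S (t - m)).ncard := by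
  have hfloor_le : ∀ μ ∈ conePoints G S t, ∑ i ∈ S, ⌊μ i⌋₊ ≤ t := by
    rintro μ ⟨-, hμ0, -, hμsum⟩
    have : ((∑ i ∈ S, ⌊μ i⌋₊ : ℕ) : ℝ) ≤ t := by
      rw [Nat.cast_sum, ← hμsum]
      exact sum_le_sum fun i _ => Nat.floor_le (hμ0 i)
    exact_mod_cast this
  have hunion : conePoints G S t =
      ⋃ m ∈ (range (t + 1) : Set ℕ), {μ ∈ conePoints G S t | ∑ i ∈ S, ⌊μ i⌋₊ = m} := by
    ext μ
    simpa [Nat.lt_succ_iff] using fun hμ => hfloor_le μ hμ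
  rw [hunion, Set.Finite.ncard_biUnion (finite_toSet _) (fun m _ => hfin.subset fun μ hμ => hμ.1)
    (fun m _ m' _ hne => Set.disjoint_left.mpr fun μ h h' => hne (h.2.symm.trans h'.2)),
    finsum_mem_coe_finset]
  refine sum_congr rfl fun m hm => ?_
  rw [← Nat.card_coe_set_eq,
    Nat.card_congr (conePointsFloorEquiv hG (Nat.lt_succ_iff.mp (mem_range.mp hm))),
    Nat.card_prod, Nat.card_eq_finsetCard, Nat.card_coe_set_eq, mul_comm]

theorem one_sub_X_pow_mul_mk_ncard_conePoints [DecidableEq ι]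
    (hG : ∀ n : ι → ℕ, (fun i => (n i : ℝ)) ∈ G) (hS : S.Nonempty)
    (hfin : ∀ t, (conePoints G S t).Finite) :
    (1 - X : ℤ⟦X⟧) ^ #S * mk (fun t => ((conePoints G S t).ncard : ℤ)) =
      mk fun h => ((boxPoints G S h).ncard : ℤ) := by
  have hcone : mk (fun t => ((conePoints G S t).ncard : ℤ)) =
      (invOneSubPow ℤ #S).val * mk fun h => ((boxPoints G S h).ncard : ℤ) := by
    ext t
    rw [coeff_mk, coeff_mul, Nat.sum_antidiagonal_eq_sum_range_succ
      (fun k l => coeff k (invOneSubPow ℤ #S).val * coeff l (mk _)), ncard_conePoints hG (hfin t),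
      invOneSubPow_val_eq_mk_sub_one_add_choose_of_pos _ _ hS.card_pos]
    push_cast
    refine sum_congr rfl fun m _ => ?_
    rw [coeff_mk, coeff_mk, card_piAntidiag_nat, Nat.choose_symm_add,
      Nat.sub_add_comm hS.card_pos]
  rw [hcone, ← mul_assoc, ← invOneSubPow_inv_eq_one_sub_pow, Units.inv_val, one_mul]

end ConeCounting

local notation "ℤ_ℝ" => RingHom.range (Int.castRingHom ℝ)

section Window

variable (s : ℕ) (b : ℕ → ℕ)

-- For `b = coeffSeq s a`, coordinate `p` of `∑_c μ_c w_c` (see `sum_smul_Wvert_apply`).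
def window (p : ℕ) : (ℕ → ℝ) →ₗ[ℝ] ℝ :=
  ∑ i ∈ Icc 1 s, (b i : ℝ) • LinearMap.proj (p + i)

def windowLattice : AddSubgroup (ℕ → ℝ) :=
  ⨅ p, (ℤ_ℝ).toAddSubgroup.comap (window s b p).toAddMonoidHom

variable {s b}

lemma window_apply (p : ℕ) (μ : ℕ → ℝ) : window s b p μ = ∑ i ∈ Icc 1 s, b i * μ (p + i) := by
  simp [window]

lemma mem_windowLattice {μ : ℕ → ℝ} : μ ∈ windowLattice s b ↔ ∀ p, window s b p μ ∈ ℤ_ℝ := by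
  simp [windowLattice]

lemma intCast_floor_window {μ : ℕ → ℝ} (hμ : μ ∈ windowLattice s b) (p : ℕ) :
    (⌊window s b p μ⌋ : ℝ) = window s b p μ := by
  obtain ⟨z, hz⟩ := mem_windowLattice.mp hμ p
  rw [← hz, eq_intCast, Int.floor_intCast]

lemma natCast_mem_windowLattice (n : ℕ → ℕ) : (fun c => (n c : ℝ)) ∈ windowLattice s b :=
  mem_windowLattice.mpr fun p => by
    rw [window_apply]
    exact sum_mem fun i _ => mul_mem (natCast_mem _ _) (natCast_mem _ _)

lemma window_eq_zero_of_le {d p : ℕ} {μ : ℕ → ℝ} (hμ : ∀ c ∉ range (d + 1), μ c = 0)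
    (hp : d ≤ p) : window s b p μ = 0 := by
  rw [window_apply]
  exact sum_eq_zero fun i hi => by rw [hμ _ (by grind), mul_zero]

lemma window_pred (hs : 1 ≤ s) {c : ℕ} (hc : c ≠ 0) (μ : ℕ → ℝ) :
    window s b (c - 1) μ = b 1 * μ c + ∑ i ∈ Ioc 1 s, b i * μ (c - 1 + i) := by
  rw [window_apply, ← add_sum_Ioc_eq_sum_Icc hs,
    Nat.sub_add_cancel (Nat.one_le_iff_ne_zero.mpr hc)]

-- The windows form a triangular system with diagonal `b 1`; the weight `μ 0` is invisible.
lemma eq_of_window_eq (hs : 1 ≤ s) (hb : b 1 ≠ 0) {d : ℕ} {μ ν : ℕ → ℝ}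
    (hμ : ∀ c ∉ range (d + 1), μ c = 0) (hν : ∀ c ∉ range (d + 1), ν c = 0)
    (h : ∀ p, window s b p μ = window s b p ν) {c : ℕ} (hc : c ≠ 0) : μ c = ν c := by
  suffices ∀ k c, d < c + k → c ≠ 0 → μ c = ν c from this d c (by omega) hc
  intro k
  induction k with
  | zero => intro c hc _; rw [hμ c (by simpa using hc), hν c (by simpa using hc)]
  | succ k ih =>
    intro c hck hc
    by_cases hlt : d < c + k
    · exact ih c hlt hc
    have hwin := h (c - 1)
    rw [window_pred hs hc, window_pred hs hc, sum_congr rfl fun i hi => by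
      rw [ih (c - 1 + i) (by grind) (by grind)]] at hwin
    exact mul_left_cancel₀ (Nat.cast_ne_zero.mpr hb) (add_right_cancel hwin)

lemma injOn_floor_window (hs : 1 ≤ s) (hb : b 1 ≠ 0) (d t : ℕ) :
    Set.InjOn (fun μ (p : Fin d) => ⌊window s b p μ⌋)
      (conePoints (windowLattice s b) (range (d + 1)) t) := by
  rintro μ ⟨hμG, -, hμS, hμsum⟩ ν ⟨hνG, -, hνS, hνsum⟩ hfloor
  have hwin : ∀ p, window s b p μ = window s b p ν := by
    intro p
    rcases lt_or_ge p d with hp | hp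
    · rw [← intCast_floor_window hμG, ← intCast_floor_window hνG]
      exact congrArg _ (congrFun hfloor ⟨p, hp⟩)
    · rw [window_eq_zero_of_le hμS hp, window_eq_zero_of_le hνS hp]
  have hpos : ∀ c, c ≠ 0 → μ c = ν c := fun c hc => eq_of_window_eq hs hb hμS hνS hwin hc
  have h0 : μ 0 = ν 0 := by
    rw [sum_range_succ', sum_congr rfl fun c _ => hpos (c + 1) c.succ_ne_zero] at hμsum
    rw [sum_range_succ'] at hνsum
    linarith
  funext c
  rcases eq_or_ne c 0 with rfl | hc
  exacts [h0, hpos c hc]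

lemma finite_conePoints_windowLattice (hs : 1 ≤ s) (hb : b 1 ≠ 0) (d t : ℕ) :
    (conePoints (windowLattice s b) (range (d + 1)) t).Finite := by
  refine Set.Finite.of_finite_image ((Set.finite_Icc (0 : Fin d → ℤ)
    fun _ => ∑ i ∈ Icc 1 s, (b i * t : ℤ)).subset ?_) (injOn_floor_window hs hb d t)
  rintro _ ⟨μ, ⟨-, hμ0, hμS, hμsum⟩, rfl⟩
  have hμt : ∀ c, μ c ≤ t := fun c => by
    by_cases hc : c ∈ range (d + 1)
    · exact hμsum ▸ single_le_sum (fun c _ => hμ0 c) hc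
    · exact hμS c hc ▸ Nat.cast_nonneg t
  refine ⟨fun p => Int.floor_nonneg.mpr ?_, fun p => Int.floor_le_iff.mpr ?_⟩
  · rw [window_apply]
    exact sum_nonneg fun i _ => mul_nonneg (Nat.cast_nonneg _) (hμ0 _)
  · rw [window_apply]
    push_cast
    refine lt_of_le_of_lt (sum_le_sum fun i _ =>
      mul_le_mul_of_nonneg_left (hμt _) (Nat.cast_nonneg _)) (lt_add_one _)

end Window

lemma Subring.mem_of_mul_mem_of_isCoprime {A : Type*} [CommRing A] (R : Subring A) {m n : ℤ}
    (h : IsCoprime m n) {x : A} (hm : m * x ∈ R) (hn : n * x ∈ R) : x ∈ R := by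
  obtain ⟨u, v, huv⟩ := h
  have hx : x = u * (m * x) + v * (n * x) := by
    rw [← mul_assoc, ← mul_assoc, ← add_mul, ← Int.cast_mul, ← Int.cast_mul, ← Int.cast_add, huv,
      Int.cast_one, one_mul]
  rw [hx]
  exact add_mem (mul_mem (intCast_mem _ _) hm) (mul_mem (intCast_mem _ _) hn)

section SupportBound

variable {s : ℕ} {b : ℕ → ℕ} {l : ℕ → ℝ} {M : ℕ}

lemma mul_pow_mem_of_lt_add (hs : 1 ≤ s) (hl : l ∈ windowLattice s b)
    (htop : ∀ c, M < c → l c = 0) (k : ℕ) : ∀ c, M < c + k → c ≠ 0 → l c * b 1 ^ k ∈ ℤ_ℝ := by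
  induction k with
  | zero => intro c hc _; simp [htop c hc]
  | succ k ih =>
    intro c hck hc
    by_cases hlt : M < c + k
    · rw [pow_succ, ← mul_assoc]
      exact mul_mem (ih c hlt hc) (natCast_mem _ _)
    have hsolve : l c * b 1 ^ (k + 1) =
        b 1 ^ k * window s b (c - 1) l - ∑ i ∈ Ioc 1 s, b i * (l (c - 1 + i) * b 1 ^ k) := by
      rw [window_pred hs hc, mul_add, mul_sum, add_sub_assoc, ← sum_sub_distrib,
        sum_eq_zero fun i _ => by ring, add_zero]
      ring
    rw [hsolve]
    exact sub_mem (mul_mem (pow_mem (natCast_mem _ _) _) (mem_windowLattice.mp hl _))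
      (sum_mem fun i hi => mul_mem (natCast_mem _ _) (ih _ (by grind) (by grind)))

-- If `l (M - k - 1) * b 1 ^ (k + 1)` were an integer, then by the window at `M - k - 2` so would be
-- `b 2 * (l (M - k) * b 1 ^ k)`, and by coprimality with `b 1` also `l (M - k) * b 1 ^ k`.
lemma mul_pow_not_mem (hs : 2 ≤ s) (hcop : (b 1).Coprime (b 2)) (hl : l ∈ windowLattice s b)
    (htop : ∀ c, M < c → l c = 0) (hM0 : 0 < l M) (hM1 : l M < 1) (k : ℕ) :
    k < M → l (M - k) * b 1 ^ k ∉ ℤ_ℝ := by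
  induction k with
  | zero =>
    rintro - ⟨z, hz⟩
    rw [eq_intCast, Nat.sub_zero, pow_zero, mul_one] at hz
    rw [← hz] at hM0 hM1
    have h0 : 0 < z := by exact_mod_cast hM0
    have h1 : z < 1 := by exact_mod_cast hM1
    omega
  | succ k ih =>
    intro hk hmem
    set c := M - (k + 1)
    have hwin : window s b (c - 1) l =
        b 1 * l c + b 2 * l (M - k) + ∑ i ∈ Ioc 2 s, b i * l (c - 1 + i) := by
      rw [window_pred (by omega) (by omega), ← Icc_add_one_left_eq_Ioc,
        ← add_sum_Ioc_eq_sum_Icc (show 1 + 1 ≤ s by omega), show c - 1 + (1 + 1) = M - k by omega,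
        add_assoc]
    have hsolve : b 2 * (l (M - k) * b 1 ^ k) = b 1 ^ k * window s b (c - 1) l -
        l c * b 1 ^ (k + 1) - ∑ i ∈ Ioc 2 s, b i * (l (c - 1 + i) * b 1 ^ k) := by
      rw [hwin, mul_add, mul_add, mul_sum, sum_congr rfl fun i _ =>
        show (b 1 : ℝ) ^ k * (b i * l (c - 1 + i)) = b i * (l (c - 1 + i) * b 1 ^ k) by ring]
      ring
    refine ih (by omega) (Subring.mem_of_mul_mem_of_isCoprime _ (m := b 1) (n := b 2)
      (Nat.isCoprime_iff_coprime.mpr hcop) ?_ ?_)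
    · rw [Int.cast_natCast, mul_left_comm, ← pow_succ']
      exact mul_pow_mem_of_lt_add (by omega) hl htop (k + 1) (M - k) (by omega) (by omega)
    · rw [Int.cast_natCast, hsolve]
      refine sub_mem (sub_mem (mul_mem (pow_mem (natCast_mem _ _) _) (mem_windowLattice.mp hl _))
        hmem) (sum_mem fun i hi => mul_mem (natCast_mem _ _)
          (mul_pow_mem_of_lt_add (by omega) hl htop k _ (by grind) (by grind)))

lemma ne_zero_of_le_top (hs : 2 ≤ s) (hcop : (b 1).Coprime (b 2)) (hl : l ∈ windowLattice s b)
    (htop : ∀ c, M < c → l c = 0) (hM0 : 0 < l M) (hM1 : l M < 1) {c : ℕ} (hc : c ≠ 0)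
    (hcM : c ≤ M) : l c ≠ 0 := by
  intro hlc
  apply mul_pow_not_mem hs hcop hl htop hM0 hM1 (M - c) (by omega)
  rw [Nat.sub_sub_self hcM, hlc, zero_mul]
  exact zero_mem _

-- Every window below the top of the support is a positive integer.
lemma le_sum_mul_sum (hs : 1 ≤ s) (hb : b 1 ≠ 0) {d : ℕ} (hl : l ∈ windowLattice s b)
    (hl0 : ∀ c, 0 ≤ l c) (hS : ∀ c ∉ range (d + 1), l c = 0)
    (hne : ∀ c, c ≠ 0 → c ≤ M → l c ≠ 0) :
    (M : ℝ) ≤ (∑ i ∈ Icc 1 s, b i) * ∑ c ∈ range (d + 1), l c := by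
  have hwin : ∀ p < M, 1 ≤ window s b p l := by
    intro p hp
    obtain ⟨z, hz⟩ := mem_windowLattice.mp hl p
    rw [eq_intCast] at hz
    have hpos : 0 < window s b p l := by
      rw [window_apply]
      refine lt_of_lt_of_le ?_ (single_le_sum (f := fun i => (b i : ℝ) * l (p + i))
        (fun i _ => mul_nonneg (Nat.cast_nonneg _) (hl0 _)) (left_mem_Icc.mpr hs))
      exact mul_pos (by positivity) (lt_of_le_of_ne (hl0 _) (hne _ (by omega) (by omega)).symm)
    rw [← hz] at hpos ⊢
    exact_mod_cast (show (0 : ℤ) < z by exact_mod_cast hpos)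
  have hshift : ∀ i, ∑ p ∈ range M, l (p + i) ≤ ∑ c ∈ range (d + 1), l c := by
    intro i
    rw [← sum_image (g := (· + i)) fun _ _ _ _ => Nat.add_right_cancel,
      ← sum_subset (inter_subset_left (s₂ := range (d + 1))) fun c hc hc' =>
        hS c fun h => hc' (mem_inter.mpr ⟨hc, h⟩)]
    exact sum_le_sum_of_subset_of_nonneg inter_subset_right fun c _ _ => hl0 c
  calc (M : ℝ) = ∑ p ∈ range M, 1 := by simp
    _ ≤ ∑ p ∈ range M, window s b p l := sum_le_sum fun p hp => hwin p (mem_range.mp hp)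
    _ = ∑ i ∈ Icc 1 s, b i * ∑ p ∈ range M, l (p + i) := by
      simp only [window_apply, mul_sum]
      exact sum_comm
    _ ≤ ∑ i ∈ Icc 1 s, b i * ∑ c ∈ range (d + 1), l c :=
      sum_le_sum fun i _ => mul_le_mul_of_nonneg_left (hshift i) (Nat.cast_nonneg _)
    _ = _ := by rw [← sum_mul, Nat.cast_sum]

theorem eq_zero_of_mem_boxPoints_of_lt (hs : 2 ≤ s) (hb : b 1 ≠ 0) (hcop : (b 1).Coprime (b 2))
    {d h : ℕ} (hl : l ∈ boxPoints (windowLattice s b) (range (d + 1)) h) {c : ℕ}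
    (hc : (∑ i ∈ Icc 1 s, b i) * h < c) : l c = 0 := by
  classical
  obtain ⟨⟨hlG, hl0, hlS, hlsum⟩, hl1⟩ := hl
  by_contra hlc
  have hcd : c ≤ d := by
    by_contra hcd
    exact hlc (hlS c (by simpa using hcd))
  set M := Nat.findGreatest (fun c => l c ≠ 0) d
  have hcM : c ≤ M := Nat.le_findGreatest hcd hlc
  have hM : l M ≠ 0 := Nat.findGreatest_spec (P := fun c => l c ≠ 0) hcd hlc
  have htop : ∀ c', M < c' → l c' = 0 := by
    intro c' hc'
    by_cases hc'd : c' ≤ d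
    · exact not_not.mp (Nat.findGreatest_is_greatest hc' hc'd)
    · exact hlS c' (by simpa using hc'd)
  have hMle := le_sum_mul_sum (by omega) hb hlG hl0 hlS fun c' hc' hc'M =>
    ne_zero_of_le_top hs hcop hlG htop (lt_of_le_of_ne (hl0 M) (Ne.symm hM)) (hl1 M) hc' hc'M
  rw [hlsum] at hMle
  have : M ≤ (∑ i ∈ Icc 1 s, b i) * h := by exact_mod_cast hMle
  omega

theorem boxPoints_windowLattice_range_eq (hs : 2 ≤ s) (hb : b 1 ≠ 0) (hcop : (b 1).Coprime (b 2))
    {d h : ℕ} (hd : (∑ i ∈ Icc 1 s, b i) * h ≤ d) :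
    boxPoints (windowLattice s b) (range (d + 1)) h =
      boxPoints (windowLattice s b) (range ((∑ i ∈ Icc 1 s, b i) * h + 1)) h := by
  set e := (∑ i ∈ Icc 1 s, b i) * h
  have hsum : ∀ l : ℕ → ℝ, (∀ c ∉ range (e + 1), l c = 0) →
      ∑ c ∈ range (d + 1), l c = ∑ c ∈ range (e + 1), l c := fun l hl =>
    (sum_subset (range_subset_range.mpr (by omega)) fun c _ hc => hl c hc).symm
  ext l
  constructor
  · intro hl
    have hle : ∀ c ∉ range (e + 1), l c = 0 := fun c hc =>
      eq_zero_of_mem_boxPoints_of_lt hs hb hcop hl (by simpa [Nat.lt_succ_iff] using hc)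
    obtain ⟨⟨hlG, hl0, -, hlsum⟩, hl1⟩ := hl
    exact ⟨⟨hlG, hl0, hle, hsum l hle ▸ hlsum⟩, hl1⟩
  · rintro ⟨⟨hlG, hl0, hlS, hlsum⟩, hl1⟩
    exact ⟨⟨hlG, hl0, fun c hc => hlS c (by rw [mem_range] at hc ⊢; omega), hsum l hlS ▸ hlsum⟩,
      hl1⟩

end SupportBound

section Multidiagonal

variable (s : ℕ) (a : Fin s → ℕ)

-- The paper's `a_i` (`a` itself is `0`-indexed), extended by `0` outside `1 ≤ i ≤ s`.
def coeffSeq (i : ℕ) : ℕ := if h : 1 ≤ i ∧ i ≤ s then a ⟨i - 1, by omega⟩ else 0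

variable {s a}

lemma mem_Icc_of_coeffSeq_ne_zero {i : ℕ} (h : coeffSeq s a i ≠ 0) : i ∈ Icc 1 s := by
  by_contra hi
  exact h (dif_neg (by simpa using hi))

lemma Wvert_apply (d : ℕ) (c : Fin (d + 1)) (p : Fin d) :
    Wvert s a d c p = coeffSeq s a (c - p) := by
  unfold Wvert coeffSeq
  by_cases h : (p : ℕ) < c ∧ (c : ℕ) - p ≤ s
  · rw [dif_pos h, dif_pos (by omega)]
  · rw [dif_neg h, dif_neg (by omega), Nat.cast_zero]

lemma window_coeffSeq_eq_sum_range {d : ℕ} {μ : ℕ → ℝ} (hμ : ∀ c ∉ range (d + 1), μ c = 0)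
    (p : ℕ) : window s (coeffSeq s a) p μ = ∑ c ∈ range (d + 1), μ c * coeffSeq s a (c - p) := by
  rw [window_apply]
  refine sum_bij_ne_zero (fun i _ _ => p + i) (fun i _ h => ?_) (fun _ _ _ _ _ _ => by omega)
    (fun c _ h => ?_) (fun i _ _ => by rw [Nat.add_sub_cancel_left, mul_comm])
  · by_contra hi
    exact h (by rw [hμ _ hi, mul_zero])
  · have hc := mem_Icc_of_coeffSeq_ne_zero (Nat.cast_ne_zero.mp (right_ne_zero_of_mul h))
    refine ⟨c - p, by grind, fun h' => h ?_, by grind⟩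
    rwa [Nat.add_sub_cancel' (by grind), mul_comm] at h'

lemma sum_smul_Wvert_apply {d : ℕ} {μ : ℕ → ℝ} (hμ : ∀ c ∉ range (d + 1), μ c = 0) (p : Fin d) :
    (∑ c : Fin (d + 1), μ c • Wvert s a d c) p = window s (coeffSeq s a) p μ := by
  rw [window_coeffSeq_eq_sum_range hμ,
    ← Fin.sum_univ_eq_sum_range (fun c => μ c * (coeffSeq s a (c - p) : ℝ))]
  simp [Finset.sum_apply, Wvert_apply]

lemma mem_smul_convexHull_Wvert_iff (d t : ℕ) (x : Fin d → ℝ) :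
    x ∈ (t : ℝ) • convexHull ℝ (Set.range (Wvert s a d)) ↔
      ∃ μ : ℕ → ℝ, (∀ c, 0 ≤ μ c) ∧ (∀ c ∉ range (d + 1), μ c = 0) ∧
        ∑ c ∈ range (d + 1), μ c = t ∧ ∀ p : Fin d, window s (coeffSeq s a) p μ = x p := by
  rw [mem_smul_convexHull_range_iff _ (Nat.cast_nonneg t)]
  constructor
  · rintro ⟨w, hw0, hsum, rfl⟩
    set μ : ℕ → ℝ := fun c => if h : c < d + 1 then w ⟨c, h⟩ else 0
    have hμw : ∀ c : Fin (d + 1), μ c = w c := fun c => dif_pos c.isLt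
    have hμS : ∀ c ∉ range (d + 1), μ c = 0 := fun c hc => dif_neg (by simpa using hc)
    refine ⟨μ, fun c => ?_, hμS, ?_, fun p => ?_⟩
    · simp only [μ]
      split_ifs
      exacts [hw0 _, le_rfl]
    · rw [← Fin.sum_univ_eq_sum_range, ← hsum]
      simp [hμw]
    · rw [← sum_smul_Wvert_apply hμS]
      simp [hμw]
  · rintro ⟨μ, hμ0, hμS, hsum, hx⟩
    refine ⟨fun c => μ c, fun c => hμ0 c, by rw [Fin.sum_univ_eq_sum_range μ, hsum], ?_⟩
    exact funext fun p => by rw [sum_smul_Wvert_apply hμS, hx]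

lemma ncard_lattice_smul_convexHull_Wvert (ha : coeffSeq s a 1 ≠ 0) (d t : ℕ) :
    {x : Fin d → ℤ |
      (fun i => (x i : ℝ)) ∈ (t : ℝ) • convexHull ℝ (Set.range (Wvert s a d))}.ncard =
      (conePoints (windowLattice s (coeffSeq s a)) (range (d + 1)) t).ncard := by
  have hs : 1 ≤ s := (mem_Icc.mp (mem_Icc_of_coeffSeq_ne_zero ha)).2
  rw [← (injOn_floor_window hs ha d t).ncard_image]
  congr 1
  ext x
  simp only [mem_smul_convexHull_Wvert_iff, Set.mem_image, Set.mem_ofPred_eq]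
  constructor
  · rintro ⟨μ, hμ0, hμS, hsum, hx⟩
    refine ⟨μ, ⟨mem_windowLattice.mpr fun p => ?_, hμ0, hμS, hsum⟩, funext fun p => by simp [hx]⟩
    rcases lt_or_ge p d with hp | hp
    · exact ⟨x ⟨p, hp⟩, by simp [hx ⟨p, hp⟩]⟩
    · exact ⟨0, by simp [window_eq_zero_of_le hμS hp]⟩
  · rintro ⟨μ, ⟨hμG, hμ0, hμS, hsum⟩, rfl⟩
    exact ⟨μ, hμ0, hμS, hsum, fun p => (intCast_floor_window hμG p).symm⟩

theorem coeff_hStar_Wvert (ha : coeffSeq s a 1 ≠ 0) (d j : ℕ) :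
    coeff j ((1 - X : ℤ⟦X⟧) ^ (d + 1) * ehrhartSeries (convexHull ℝ (Set.range (Wvert s a d)))) =
      (boxPoints (windowLattice s (coeffSeq s a)) (range (d + 1)) j).ncard := by
  have hs : 1 ≤ s := (mem_Icc.mp (mem_Icc_of_coeffSeq_ne_zero ha)).2
  have hEhr : ehrhartSeries (convexHull ℝ (Set.range (Wvert s a d))) =
      mk fun t => ((conePoints (windowLattice s (coeffSeq s a)) (range (d + 1)) t).ncard : ℤ) := by
    ext t
    rw [ehrhartSeries, coeff_mk, coeff_mk, ncard_lattice_smul_convexHull_Wvert ha]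
  have hStar := one_sub_X_pow_mul_mk_ncard_conePoints natCast_mem_windowLattice
    nonempty_range_add_one (finite_conePoints_windowLattice (b := coeffSeq s a) hs ha d)
  rw [card_range] at hStar
  rw [hEhr, hStar, coeff_mk]

end Multidiagonal

theorem stmt17 (s : ℕ) (hs : 2 ≤ s) (a : Fin s → ℕ)
    (hpos : ∀ i, 1 ≤ a i)
    (hgcd : Nat.gcd (a ⟨0, by omega⟩) (a ⟨1, by omega⟩) = 1) (j : ℕ) :
    ∃ N : ℕ, s ≤ N ∧ ∀ d d' : ℕ, N ≤ d → N ≤ d' →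
      PowerSeries.coeff (R := ℤ) j
        ((1 - PowerSeries.X : PowerSeries ℤ) ^ (d + 1) *
          ehrhartSeries (convexHull ℝ (Set.range (Wvert s a d)))) =
      PowerSeries.coeff (R := ℤ) j
        ((1 - PowerSeries.X : PowerSeries ℤ) ^ (d' + 1) *
          ehrhartSeries (convexHull ℝ (Set.range (Wvert s a d')))) := by
  have h1 : coeffSeq s a 1 = a ⟨0, by omega⟩ := dif_pos (by omega)
  have h2 : coeffSeq s a 2 = a ⟨1, by omega⟩ := dif_pos (by omega)
  have hb : coeffSeq s a 1 ≠ 0 := h1 ▸ Nat.one_le_iff_ne_zero.mp (hpos _)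
  have hcop : (coeffSeq s a 1).Coprime (coeffSeq s a 2) := by rw [h1, h2]; exact hgcd
  refine ⟨(∑ i ∈ Icc 1 s, coeffSeq s a i) * j + s, by omega, fun d d' hd hd' => ?_⟩
  rw [coeff_hStar_Wvert hb, coeff_hStar_Wvert hb,
    boxPoints_windowLattice_range_eq hs hb hcop (d := d) (by omega),
    boxPoints_windowLattice_range_eq hs hb hcop (d := d') (by omega)]
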